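/- arXiv:1909.02096 — 4 statements merged into one kernel-verified Lean document; each statement's English description precedes it below -/
import Mathlib

section
/- Let X be a metric space, x ∈ X, and β : [t₀, t₂] → X a (q, Q)-quasi-geodesic segment connecting z = β(t₂) to w. Let y = β(t₁) be a nearest point on β to x, and let γ : [t₀', t₂] → X be the concatenation of the geodesic segment [x, y] (parametrized by arc length) followed by the quasi-geodesic segment of β from y to z. Then γ is a (3q, Q)-quasi-geodesic; that is, for the endpoints x = γ(t₀') and z = γ(t₂) one has (1/(3q))|t₂ − t₀'| − Q/3 ≤ d(x, z) ≤ q|t₂ − t₀'| + Q, and the analogous inequalities hold for every pair of points along γ. -/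
/-- A `(q,Q)`-quasi-geodesic (as a map) on a set of parameters. -/
def IsQuasiGeodesicOn {X : Type*} [MetricSpace X] (q Q : ℝ) (f : ℝ → X) (s : Set ℝ) : Prop :=
  ∀ a ∈ s, ∀ b ∈ s, (1 / q) * |a - b| - Q ≤ dist (f a) (f b) ∧ dist (f a) (f b) ≤ q * |a - b| + Q

/-!
Only pairs `a ≤ t₁ ≤ b` straddling the junction need an argument. Put `p = γ a`, `y = γ t₁`,
`z = γ b`. Since `p` lies on a geodesic from `x = γ t₀'` to its nearest point `y`, the triangle
inequality through `p` gives `d(p, y) ≤ d(p, z)`, and then `d(y, z) ≤ d(y, p) + d(p, z) ≤ 2 d(p, z)`. So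
`d(p, z)` dominates both `t₁ - a` and half of `(1/q)(b - t₁) - Q`; adding up yields
`3 d(p, z) ≥ (1/q)(b - a) - Q`.
-/

section NearestPoint

variable {X : Type*} [MetricSpace X] {x p y z : X}

theorem dist_le_dist_of_nearest (hp : dist x p + dist p y = dist x y)
    (hnear : dist x y ≤ dist x z) : dist p y ≤ dist p z := by
  linarith [dist_triangle x p z]

theorem dist_le_two_mul_dist_of_nearest (hp : dist x p + dist p y = dist x y)
    (hnear : dist x y ≤ dist x z) : dist y z ≤ 2 * dist p z := by
  linarith [dist_triangle y p z, dist_comm y p, dist_le_dist_of_nearest hp hnear]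

end NearestPoint

section Concatenation

variable {X : Type*} [MetricSpace X] {q Q : ℝ} {γ : ℝ → X} {t₀ t₁ t₂ a b : ℝ}

theorem concat_bounds_of_mem_geodesic (hq : 1 ≤ q) (hQ : 0 ≤ Q)
    (hgeo : ∀ s ∈ Set.Icc t₀ t₁, ∀ s' ∈ Set.Icc t₀ t₁, dist (γ s) (γ s') = |s - s'|)
    (ha : a ∈ Set.Icc t₀ t₁) (hb : b ∈ Set.Icc t₀ t₁) :
    (1 / (3 * q)) * |a - b| - Q / 3 ≤ dist (γ a) (γ b) ∧
      dist (γ a) (γ b) ≤ q * |a - b| + Q := by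
  have hcoef : 1 / (3 * q) ≤ 1 := by rw [div_le_one (by positivity)]; linarith
  rw [hgeo a ha b hb]
  constructor
  · linarith [mul_le_of_le_one_left (abs_nonneg (a - b)) hcoef]
  · linarith [le_mul_of_one_le_left (abs_nonneg (a - b)) hq]

theorem concat_bounds_of_mem_quasiGeodesic (hqg : IsQuasiGeodesicOn q Q γ (Set.Icc t₁ t₂))
    (ha : a ∈ Set.Icc t₁ t₂) (hb : b ∈ Set.Icc t₁ t₂) :
    (1 / (3 * q)) * |a - b| - Q / 3 ≤ dist (γ a) (γ b) ∧
      dist (γ a) (γ b) ≤ q * |a - b| + Q := by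
  obtain ⟨hlower, hupper⟩ := hqg a ha b hb
  refine ⟨?_, hupper⟩
  rw [mul_comm 3 q, ← div_div, div_mul_eq_mul_div]
  linarith [dist_nonneg (x := γ a) (y := γ b)]

theorem concat_bounds_of_mem_geodesic_of_mem_quasiGeodesic (hq : 1 ≤ q)
    (hgeo : ∀ s ∈ Set.Icc t₀ t₁, ∀ s' ∈ Set.Icc t₀ t₁, dist (γ s) (γ s') = |s - s'|)
    (hqg : IsQuasiGeodesicOn q Q γ (Set.Icc t₁ t₂))
    (hnear : ∀ s ∈ Set.Icc t₁ t₂, dist (γ t₀) (γ t₁) ≤ dist (γ t₀) (γ s))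
    (ha : a ∈ Set.Icc t₀ t₁) (hb : b ∈ Set.Icc t₁ t₂) :
    (1 / (3 * q)) * |a - b| - Q / 3 ≤ dist (γ a) (γ b) ∧
      dist (γ a) (γ b) ≤ q * |a - b| + Q := by
  have ht₀ : t₀ ∈ Set.Icc t₀ t₁ := ⟨le_rfl, ha.1.trans ha.2⟩
  have ht₁ : t₁ ∈ Set.Icc t₀ t₁ := ⟨ha.1.trans ha.2, le_rfl⟩
  have ht₁' : t₁ ∈ Set.Icc t₁ t₂ := ⟨le_rfl, hb.1.trans hb.2⟩
  have hxp : dist (γ t₀) (γ a) = a - t₀ := by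
    rw [hgeo _ ht₀ _ ha, abs_sub_comm, abs_of_nonneg (by linarith [ha.1])]
  have hpy : dist (γ a) (γ t₁) = t₁ - a := by
    rw [hgeo _ ha _ ht₁, abs_sub_comm, abs_of_nonneg (by linarith [ha.2])]
  have hxy : dist (γ t₀) (γ t₁) = t₁ - t₀ := by
    rw [hgeo _ ht₀ _ ht₁, abs_sub_comm, abs_of_nonneg (by linarith [ha.1, ha.2])]
  have hbetween : dist (γ t₀) (γ a) + dist (γ a) (γ t₁) = dist (γ t₀) (γ t₁) := by
    rw [hxp, hpy, hxy]; ring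
  have hpz : t₁ - a ≤ dist (γ a) (γ b) :=
    hpy ▸ dist_le_dist_of_nearest hbetween (hnear b hb)
  have hyz := dist_le_two_mul_dist_of_nearest hbetween (hnear b hb)
  obtain ⟨hlower, hupper⟩ := hqg t₁ ht₁' b hb
  have hab : |a - b| = (t₁ - a) + (b - t₁) := by
    rw [abs_sub_comm, abs_of_nonneg (by linarith [ha.2, hb.1])]; ring
  rw [abs_sub_comm, abs_of_nonneg (by linarith [hb.1] : 0 ≤ b - t₁)] at hlower hupper
  rw [hab]
  constructor
  · have hinv : 1 / q * (t₁ - a) ≤ t₁ - a :=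
      mul_le_of_le_one_left (by linarith [ha.2]) ((div_le_one (by linarith)).2 hq)
    rw [mul_comm 3 q, ← div_div, div_mul_eq_mul_div]
    linarith
  · have hq_mul : t₁ - a ≤ q * (t₁ - a) := le_mul_of_one_le_left (by linarith [ha.2]) hq
    linarith [dist_triangle (γ a) (γ t₁) (γ b)]

end Concatenation

theorem stmt_2_general {X : Type*} [MetricSpace X] (q Q : ℝ) (hq : 1 ≤ q) (hQ : 0 ≤ Q)
    (γ : ℝ → X) (t₀' t₁ t₂ : ℝ)
    (hgeo : ∀ s ∈ Set.Icc t₀' t₁, ∀ s' ∈ Set.Icc t₀' t₁, dist (γ s) (γ s') = |s - s'|)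
    (hqg : IsQuasiGeodesicOn q Q γ (Set.Icc t₁ t₂))
    (hnear : ∀ s ∈ Set.Icc t₁ t₂, dist (γ t₀') (γ t₁) ≤ dist (γ t₀') (γ s)) :
    ∀ a ∈ Set.Icc t₀' t₂, ∀ b ∈ Set.Icc t₀' t₂,
      (1 / (3 * q)) * |a - b| - Q / 3 ≤ dist (γ a) (γ b) ∧
        dist (γ a) (γ b) ≤ q * |a - b| + Q := by
  intro a ha b hb
  wlog hab : a ≤ b generalizing a b
  · simpa only [dist_comm, abs_sub_comm] using this b hb a ha (le_of_not_ge hab)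
  rcases le_total b t₁ with hb₁ | hb₁
  · exact concat_bounds_of_mem_geodesic hq hQ hgeo ⟨ha.1, hab.trans hb₁⟩ ⟨ha.1.trans hab, hb₁⟩
  rcases le_total t₁ a with ha₁ | ha₁
  · exact concat_bounds_of_mem_quasiGeodesic hqg ⟨ha₁, hab.trans hb.2⟩ ⟨hb₁, hb.2⟩
  · exact concat_bounds_of_mem_geodesic_of_mem_quasiGeodesic hq hgeo hqg hnear
      ⟨ha.1, ha₁⟩ ⟨hb₁, hb.2⟩

/-- the concatenation `γ` of a geodesic segment `[x,y]`
(parametrized by arc length on `[t₀', t₁]`), where `y = γ t₁` is a nearest point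
on the quasi-geodesic part to `x = γ t₀'`, followed by a `(q,Q)`-quasi-geodesic
segment (on `[t₁, t₂]`), is a `(3q, Q)`-quasi-geodesic: for every pair of points
along `γ`, `(1/(3q))|a − b| − Q/3 ≤ d(γ a, γ b) ≤ q|a − b| + Q`. -/
theorem stmt_2 {X : Type*} [MetricSpace X] (q Q : ℝ) (hq : 1 ≤ q) (hQ : 0 ≤ Q)
    (γ : ℝ → X) (t₀' t₁ t₂ : ℝ) (h01 : t₀' ≤ t₁) (h12 : t₁ ≤ t₂)
    (hgeo : ∀ s ∈ Set.Icc t₀' t₁, ∀ s' ∈ Set.Icc t₀' t₁, dist (γ s) (γ s') = |s - s'|)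
    (hqg : IsQuasiGeodesicOn q Q γ (Set.Icc t₁ t₂))
    (hnear : ∀ s ∈ Set.Icc t₁ t₂, dist (γ t₀') (γ t₁) ≤ dist (γ t₀') (γ s)) :
    ∀ a ∈ Set.Icc t₀' t₂, ∀ b ∈ Set.Icc t₀' t₂,
      (1 / (3 * q)) * |a - b| - Q / 3 ≤ dist (γ a) (γ b) ∧
        dist (γ a) (γ b) ≤ q * |a - b| + Q :=
  stmt_2_general q Q hq hQ γ t₀' t₁ t₂ hgeo hqg hnear
end

section
/- Let X be a proper CAT(0) space with base-point o, κ a sublinear function, and b a geodesic ray from o. If b lies in the (κ,n)-neighbourhood of a geodesic ray c from o (i.e., every point x on b satisfies d(x, c) ≤ n·κ(‖x‖)) and c lies in some (κ,n)-neighbourhood of b, then b = c. That is, each κ-equivalence class of rays contains at most one geodesic ray. -/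
/-- In a proper CAT(0) space (CAT(0)-ness encoded via convexity of
the distance function along geodesics from a common point), if two geodesic
rays `b, c` from `o` lie in `(κ,n)`-neighbourhoods of each other, then `b = c`:
each κ-equivalence class contains at most one geodesic ray. -/
theorem stmt_5 {X : Type*} [MetricSpace X] [ProperSpace X] (o : X) (κ : ℝ → ℝ)
    (hκmono : MonotoneOn κ (Set.Ici 0))
    (hκconc : ConcaveOn ℝ (Set.Ici 0) κ)
    (hκone : ∀ t : ℝ, 0 ≤ t → 1 ≤ κ t)
    (hκsub : Filter.Tendsto (fun t => κ t / t) Filter.atTop (nhds 0))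
    (b c : ℝ → X)
    (hb : ∀ s t : ℝ, 0 ≤ s → 0 ≤ t → dist (b s) (b t) = |s - t|)
    (hc : ∀ s t : ℝ, 0 ≤ s → 0 ≤ t → dist (c s) (c t) = |s - t|)
    (hb0 : b 0 = o) (hc0 : c 0 = o)
    (hconv : ∀ s s' : ℝ, 0 ≤ s → 0 ≤ s' → ∀ lam : ℝ, 0 ≤ lam → lam ≤ 1 →
      dist (b (lam * s)) (c (lam * s')) ≤ lam * dist (b s) (c s'))
    (n : ℝ) (hn : 0 < n)
    (hbc : ∀ t : ℝ, 0 ≤ t →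
      Metric.infDist (b t) (c '' Set.Ici 0) ≤ n * κ (dist o (b t)))
    (hcb : ∀ t : ℝ, 0 ≤ t →
      Metric.infDist (c t) (b '' Set.Ici 0) ≤ n * κ (dist o (c t))) :
    ∀ t : ℝ, 0 ≤ t → b t = c t := by
  intro t ht
  have key : ∀ s : ℝ, max 1 t ≤ s → dist (b t) (c t) ≤ 2 * n * t * (κ s / s) := by
    intro s hs
    have hs1 : (1:ℝ) ≤ s := le_trans (le_max_left _ _) hs
    have hts : t ≤ s := le_trans (le_max_right _ _) hs
    have hs0 : (0:ℝ) < s := lt_of_lt_of_le one_pos hs1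
    have hds : dist o (b s) = s := by
      rw [← hb0, hb 0 s le_rfl hs0.le]
      simp [abs_of_nonpos, hs0.le]
    -- step 1: dist (b s) (c s) ≤ 2 * (n * κ s)
    have h2 : dist (b s) (c s) / 2 ≤ Metric.infDist (b s) (c '' Set.Ici 0) := by
      by_contra hlt
      push_neg at hlt
      obtain ⟨y, hy, hylt⟩ :=
        (Metric.infDist_lt_iff ⟨c 0, Set.mem_image_of_mem c (Set.mem_Ici.mpr le_rfl)⟩).1 hlt
      obtain ⟨s', hs', rfl⟩ := hy
      have h1 : dist (c s') (c s) = |s' - s| := hc s' s (Set.mem_Ici.mp hs') hs0.le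
      have hdo : dist o (c s') = s' := by
        rw [← hc0, hc 0 s' le_rfl (Set.mem_Ici.mp hs')]
        simp [abs_of_nonpos, Set.mem_Ici.mp hs']
      have habs : |s' - s| ≤ dist (c s') (b s) := by
        have := abs_dist_sub_le (c s') (b s) o
        rw [dist_comm (c s') o, dist_comm (b s) o, hdo, hds] at this
        exact this
      have htr : dist (b s) (c s) ≤ dist (b s) (c s') + dist (c s') (c s) :=
        dist_triangle _ _ _
      rw [h1] at htr
      rw [dist_comm] at habs
      linarith
    have hinf := hbc s hs0.le
    rw [hds] at hinf
    have hstep1 : dist (b s) (c s) ≤ 2 * (n * κ s) := by linarith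
    -- step 2: convexity
    have hlam0 : (0:ℝ) ≤ t / s := div_nonneg ht hs0.le
    have hlam1 : t / s ≤ 1 := (div_le_one hs0).2 hts
    have hcv := hconv s s hs0.le hs0.le (t / s) hlam0 hlam1
    rw [div_mul_cancel₀ t (ne_of_gt hs0)] at hcv
    have hfinal : dist (b t) (c t) ≤ (t / s) * (2 * (n * κ s)) :=
      le_trans hcv (mul_le_mul_of_nonneg_left hstep1 hlam0)
    have heq : (t / s) * (2 * (n * κ s)) = 2 * n * t * (κ s / s) := by
      field_simp
    linarith [heq ▸ hfinal]
  have h0 : Filter.Tendsto (fun s => 2 * n * t * (κ s / s)) Filter.atTop (nhds 0) := by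
    simpa using hκsub.const_mul (2 * n * t)
  have hle : dist (b t) (c t) ≤ 0 :=
    ge_of_tendsto h0 (Filter.eventually_atTop.2 ⟨max 1 t, key⟩)
  exact dist_le_zero.mp hle
end

section
/- Let Z be a κ-contracting closed subset of a proper CAT(0) space X with contracting constant c_Z, and let η : [s, s'] → X be a (q,Q)-quasi-geodesic segment that stays outside N_κ(Z, m₀), where m₀ = q((q+1) + q·c_Z + Q). Then |s' − s| ≤ m₁·(d(η(s), Z) + d(η(s'), Z)), where m₁ = q·c_Z + q + Q. -/
/-- The set of nearest points of `Z` to `x`. -/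
def projSet {X : Type*} [MetricSpace X] (x : X) (Z : Set X) : Set X :=
  {z ∈ Z | dist x z = Metric.infDist x Z}

set_option maxHeartbeats 1000000
set_option maxRecDepth 4000

private lemma stmt8_N_nonneg (e Q c : ℝ) (he : 0 ≤ e) (hQ : 0 ≤ Q) (hc0 : 0 ≤ c) :
    0 ≤ 2*((1+e)*(((1+e)+1)+(1+e)*c+Q))^2*(((1+e)*(((1+e)+1)+(1+e)*c+Q))-(1+e))*
        (((1+e)*(((1+e)+1)+(1+e)*c+Q))-Q-(1+e)^2*c) -
        (1+e)^2*(((1+e)*(((1+e)+1)+(1+e)*c+Q))-Q)*(((1+e)*(((1+e)+1)+(1+e)*c+Q))+c)*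
        (2*((1+e)*(((1+e)+1)+(1+e)*c+Q))+Q) := by
  linarith [
    mul_nonneg (mul_nonneg (pow_nonneg he 0) (pow_nonneg hQ 1)) (pow_nonneg hc0 0),
    mul_nonneg (mul_nonneg (pow_nonneg he 0) (pow_nonneg hQ 1)) (pow_nonneg hc0 1),
    mul_nonneg (mul_nonneg (pow_nonneg he 0) (pow_nonneg hQ 1)) (pow_nonneg hc0 2),
    mul_nonneg (mul_nonneg (pow_nonneg he 0) (pow_nonneg hQ 2)) (pow_nonneg hc0 0),
    mul_nonneg (mul_nonneg (pow_nonneg he 0) (pow_nonneg hQ 2)) (pow_nonneg hc0 1),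
    mul_nonneg (mul_nonneg (pow_nonneg he 0) (pow_nonneg hQ 3)) (pow_nonneg hc0 0),
    mul_nonneg (mul_nonneg (pow_nonneg he 1) (pow_nonneg hQ 0)) (pow_nonneg hc0 1),
    mul_nonneg (mul_nonneg (pow_nonneg he 1) (pow_nonneg hQ 0)) (pow_nonneg hc0 2),
    mul_nonneg (mul_nonneg (pow_nonneg he 1) (pow_nonneg hQ 0)) (pow_nonneg hc0 3),
    mul_nonneg (mul_nonneg (pow_nonneg he 1) (pow_nonneg hQ 1)) (pow_nonneg hc0 0),
    mul_nonneg (mul_nonneg (pow_nonneg he 1) (pow_nonneg hQ 1)) (pow_nonneg hc0 1),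
    mul_nonneg (mul_nonneg (pow_nonneg he 1) (pow_nonneg hQ 1)) (pow_nonneg hc0 2),
    mul_nonneg (mul_nonneg (pow_nonneg he 1) (pow_nonneg hQ 1)) (pow_nonneg hc0 3),
    mul_nonneg (mul_nonneg (pow_nonneg he 1) (pow_nonneg hQ 2)) (pow_nonneg hc0 0),
    mul_nonneg (mul_nonneg (pow_nonneg he 1) (pow_nonneg hQ 2)) (pow_nonneg hc0 1),
    mul_nonneg (mul_nonneg (pow_nonneg he 1) (pow_nonneg hQ 2)) (pow_nonneg hc0 2),
    mul_nonneg (mul_nonneg (pow_nonneg he 1) (pow_nonneg hQ 3)) (pow_nonneg hc0 0),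
    mul_nonneg (mul_nonneg (pow_nonneg he 1) (pow_nonneg hQ 3)) (pow_nonneg hc0 1),
    mul_nonneg (mul_nonneg (pow_nonneg he 1) (pow_nonneg hQ 4)) (pow_nonneg hc0 0),
    mul_nonneg (mul_nonneg (pow_nonneg he 2) (pow_nonneg hQ 0)) (pow_nonneg hc0 1),
    mul_nonneg (mul_nonneg (pow_nonneg he 2) (pow_nonneg hQ 0)) (pow_nonneg hc0 2),
    mul_nonneg (mul_nonneg (pow_nonneg he 2) (pow_nonneg hQ 0)) (pow_nonneg hc0 3),
    mul_nonneg (mul_nonneg (pow_nonneg he 2) (pow_nonneg hQ 1)) (pow_nonneg hc0 0),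
    mul_nonneg (mul_nonneg (pow_nonneg he 2) (pow_nonneg hQ 1)) (pow_nonneg hc0 1),
    mul_nonneg (mul_nonneg (pow_nonneg he 2) (pow_nonneg hQ 1)) (pow_nonneg hc0 2),
    mul_nonneg (mul_nonneg (pow_nonneg he 2) (pow_nonneg hQ 1)) (pow_nonneg hc0 3),
    mul_nonneg (mul_nonneg (pow_nonneg he 2) (pow_nonneg hQ 2)) (pow_nonneg hc0 0),
    mul_nonneg (mul_nonneg (pow_nonneg he 2) (pow_nonneg hQ 2)) (pow_nonneg hc0 1),
    mul_nonneg (mul_nonneg (pow_nonneg he 2) (pow_nonneg hQ 2)) (pow_nonneg hc0 2),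
    mul_nonneg (mul_nonneg (pow_nonneg he 2) (pow_nonneg hQ 3)) (pow_nonneg hc0 0),
    mul_nonneg (mul_nonneg (pow_nonneg he 2) (pow_nonneg hQ 3)) (pow_nonneg hc0 1),
    mul_nonneg (mul_nonneg (pow_nonneg he 2) (pow_nonneg hQ 4)) (pow_nonneg hc0 0),
    mul_nonneg (mul_nonneg (pow_nonneg he 3) (pow_nonneg hQ 0)) (pow_nonneg hc0 1),
    mul_nonneg (mul_nonneg (pow_nonneg he 3) (pow_nonneg hQ 0)) (pow_nonneg hc0 2),
    mul_nonneg (mul_nonneg (pow_nonneg he 3) (pow_nonneg hQ 0)) (pow_nonneg hc0 3),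
    mul_nonneg (mul_nonneg (pow_nonneg he 3) (pow_nonneg hQ 1)) (pow_nonneg hc0 0),
    mul_nonneg (mul_nonneg (pow_nonneg he 3) (pow_nonneg hQ 1)) (pow_nonneg hc0 1),
    mul_nonneg (mul_nonneg (pow_nonneg he 3) (pow_nonneg hQ 1)) (pow_nonneg hc0 2),
    mul_nonneg (mul_nonneg (pow_nonneg he 3) (pow_nonneg hQ 1)) (pow_nonneg hc0 3),
    mul_nonneg (mul_nonneg (pow_nonneg he 3) (pow_nonneg hQ 2)) (pow_nonneg hc0 0),
    mul_nonneg (mul_nonneg (pow_nonneg he 3) (pow_nonneg hQ 2)) (pow_nonneg hc0 1),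
    mul_nonneg (mul_nonneg (pow_nonneg he 3) (pow_nonneg hQ 2)) (pow_nonneg hc0 2),
    mul_nonneg (mul_nonneg (pow_nonneg he 3) (pow_nonneg hQ 3)) (pow_nonneg hc0 0),
    mul_nonneg (mul_nonneg (pow_nonneg he 3) (pow_nonneg hQ 3)) (pow_nonneg hc0 1),
    mul_nonneg (mul_nonneg (pow_nonneg he 3) (pow_nonneg hQ 4)) (pow_nonneg hc0 0),
    mul_nonneg (mul_nonneg (pow_nonneg he 4) (pow_nonneg hQ 0)) (pow_nonneg hc0 1),
    mul_nonneg (mul_nonneg (pow_nonneg he 4) (pow_nonneg hQ 0)) (pow_nonneg hc0 2),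
    mul_nonneg (mul_nonneg (pow_nonneg he 4) (pow_nonneg hQ 0)) (pow_nonneg hc0 3),
    mul_nonneg (mul_nonneg (pow_nonneg he 4) (pow_nonneg hQ 1)) (pow_nonneg hc0 0),
    mul_nonneg (mul_nonneg (pow_nonneg he 4) (pow_nonneg hQ 1)) (pow_nonneg hc0 1),
    mul_nonneg (mul_nonneg (pow_nonneg he 4) (pow_nonneg hQ 1)) (pow_nonneg hc0 2),
    mul_nonneg (mul_nonneg (pow_nonneg he 4) (pow_nonneg hQ 1)) (pow_nonneg hc0 3),
    mul_nonneg (mul_nonneg (pow_nonneg he 4) (pow_nonneg hQ 2)) (pow_nonneg hc0 0),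
    mul_nonneg (mul_nonneg (pow_nonneg he 4) (pow_nonneg hQ 2)) (pow_nonneg hc0 1),
    mul_nonneg (mul_nonneg (pow_nonneg he 4) (pow_nonneg hQ 2)) (pow_nonneg hc0 2),
    mul_nonneg (mul_nonneg (pow_nonneg he 4) (pow_nonneg hQ 3)) (pow_nonneg hc0 0),
    mul_nonneg (mul_nonneg (pow_nonneg he 4) (pow_nonneg hQ 3)) (pow_nonneg hc0 1),
    mul_nonneg (mul_nonneg (pow_nonneg he 4) (pow_nonneg hQ 4)) (pow_nonneg hc0 0),
    mul_nonneg (mul_nonneg (pow_nonneg he 5) (pow_nonneg hQ 0)) (pow_nonneg hc0 1),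
    mul_nonneg (mul_nonneg (pow_nonneg he 5) (pow_nonneg hQ 0)) (pow_nonneg hc0 2),
    mul_nonneg (mul_nonneg (pow_nonneg he 5) (pow_nonneg hQ 0)) (pow_nonneg hc0 3),
    mul_nonneg (mul_nonneg (pow_nonneg he 5) (pow_nonneg hQ 1)) (pow_nonneg hc0 0),
    mul_nonneg (mul_nonneg (pow_nonneg he 5) (pow_nonneg hQ 1)) (pow_nonneg hc0 1),
    mul_nonneg (mul_nonneg (pow_nonneg he 5) (pow_nonneg hQ 1)) (pow_nonneg hc0 2),
    mul_nonneg (mul_nonneg (pow_nonneg he 5) (pow_nonneg hQ 1)) (pow_nonneg hc0 3),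
    mul_nonneg (mul_nonneg (pow_nonneg he 5) (pow_nonneg hQ 2)) (pow_nonneg hc0 0),
    mul_nonneg (mul_nonneg (pow_nonneg he 5) (pow_nonneg hQ 2)) (pow_nonneg hc0 1),
    mul_nonneg (mul_nonneg (pow_nonneg he 5) (pow_nonneg hQ 2)) (pow_nonneg hc0 2),
    mul_nonneg (mul_nonneg (pow_nonneg he 5) (pow_nonneg hQ 3)) (pow_nonneg hc0 0),
    mul_nonneg (mul_nonneg (pow_nonneg he 5) (pow_nonneg hQ 3)) (pow_nonneg hc0 1),
    mul_nonneg (mul_nonneg (pow_nonneg he 6) (pow_nonneg hQ 0)) (pow_nonneg hc0 1),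
    mul_nonneg (mul_nonneg (pow_nonneg he 6) (pow_nonneg hQ 0)) (pow_nonneg hc0 2),
    mul_nonneg (mul_nonneg (pow_nonneg he 6) (pow_nonneg hQ 0)) (pow_nonneg hc0 3),
    mul_nonneg (mul_nonneg (pow_nonneg he 6) (pow_nonneg hQ 1)) (pow_nonneg hc0 0),
    mul_nonneg (mul_nonneg (pow_nonneg he 6) (pow_nonneg hQ 1)) (pow_nonneg hc0 1),
    mul_nonneg (mul_nonneg (pow_nonneg he 6) (pow_nonneg hQ 1)) (pow_nonneg hc0 2),
    mul_nonneg (mul_nonneg (pow_nonneg he 6) (pow_nonneg hQ 1)) (pow_nonneg hc0 3),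
    mul_nonneg (mul_nonneg (pow_nonneg he 6) (pow_nonneg hQ 2)) (pow_nonneg hc0 0),
    mul_nonneg (mul_nonneg (pow_nonneg he 6) (pow_nonneg hQ 2)) (pow_nonneg hc0 1),
    mul_nonneg (mul_nonneg (pow_nonneg he 6) (pow_nonneg hQ 2)) (pow_nonneg hc0 2),
    mul_nonneg (mul_nonneg (pow_nonneg he 7) (pow_nonneg hQ 0)) (pow_nonneg hc0 1),
    mul_nonneg (mul_nonneg (pow_nonneg he 7) (pow_nonneg hQ 0)) (pow_nonneg hc0 2),
    mul_nonneg (mul_nonneg (pow_nonneg he 7) (pow_nonneg hQ 0)) (pow_nonneg hc0 3),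
    mul_nonneg (mul_nonneg (pow_nonneg he 7) (pow_nonneg hQ 1)) (pow_nonneg hc0 0),
    mul_nonneg (mul_nonneg (pow_nonneg he 7) (pow_nonneg hQ 1)) (pow_nonneg hc0 1),
    mul_nonneg (mul_nonneg (pow_nonneg he 7) (pow_nonneg hQ 1)) (pow_nonneg hc0 2),
    mul_nonneg (mul_nonneg (pow_nonneg he 7) (pow_nonneg hQ 1)) (pow_nonneg hc0 3),
    mul_nonneg he hQ]

private lemma stmt8_star (q Q c : ℝ) (hq : 1 ≤ q) (hQ : 0 ≤ Q) (hc : 0 < c) :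
    (1 + c / (q*((q+1)+q*c+Q))) * (1 + Q / (2*(q*((q+1)+q*c+Q)))) ≤
      (q*c + q + Q) * (1/q - q*c/((q*((q+1)+q*c+Q)) - Q)) := by
  have hq0 : (0:ℝ) < q := lt_of_lt_of_le one_pos hq
  have hc0 : (0:ℝ) ≤ c := hc.le
  have hM0 : (0:ℝ) < q*((q+1)+q*c+Q) := by positivity
  have hMQ : (0:ℝ) < q*((q+1)+q*c+Q) - Q := by nlinarith [mul_nonneg (sub_nonneg.2 hq) hQ, mul_nonneg (mul_nonneg hq0.le hq0.le) hc0]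
  have hN : 0 ≤ 2*(q*((q+1)+q*c+Q))^2*((q*((q+1)+q*c+Q))-q)*((q*((q+1)+q*c+Q))-Q-q^2*c) -
      q^2*((q*((q+1)+q*c+Q))-Q)*((q*((q+1)+q*c+Q))+c)*(2*(q*((q+1)+q*c+Q))+Q) := by
    have := stmt8_N_nonneg (q-1) Q c (by linarith) hQ hc0
    linarith [this]
  rw [← sub_nonneg]
  have hrew : (q*c + q + Q) * (1/q - q*c/((q*((q+1)+q*c+Q)) - Q)) -
      (1 + c / (q*((q+1)+q*c+Q))) * (1 + Q / (2*(q*((q+1)+q*c+Q)))) =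
      (2*(q*((q+1)+q*c+Q))^2*((q*((q+1)+q*c+Q))-q)*((q*((q+1)+q*c+Q))-Q-q^2*c) -
        q^2*((q*((q+1)+q*c+Q))-Q)*((q*((q+1)+q*c+Q))+c)*(2*(q*((q+1)+q*c+Q))+Q)) /
      (2 * q^2 * (q*((q+1)+q*c+Q))^2 * ((q*((q+1)+q*c+Q)) - Q)) := by
    field_simp
    ring
  rw [hrew]
  positivity

/-- Let `Z` be a κ-contracting closed subset of a proper CAT(0)
space `X` with contracting constant `c_Z`, and `η : [s,s'] → X` a
`(q,Q)`-quasi-geodesic segment staying outside `N_κ(Z, m₀)` where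
`m₀ = q((q+1) + q·c_Z + Q)`.  Then
`|s' − s| ≤ m₁·(d(η(s),Z) + d(η(s'),Z))` with `m₁ = q·c_Z + q + Q`. -/
theorem stmt_8 {X : Type*} [MetricSpace X] [ProperSpace X] (o : X) (κ : ℝ → ℝ)
    (hκmono : MonotoneOn κ (Set.Ici 0))
    (hκconc : ConcaveOn ℝ (Set.Ici 0) κ)
    (hκone : ∀ t : ℝ, 0 ≤ t → 1 ≤ κ t)
    (hκsub : Filter.Tendsto (fun t => κ t / t) Filter.atTop (nhds 0))
    (Z : Set X) (hZcl : IsClosed Z) (hZne : Z.Nonempty)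
    (cZ q Q : ℝ) (hcZ : 0 < cZ) (hq : 1 ≤ q) (hQ : 0 ≤ Q)
    (hcontr : ∀ x y : X, dist x y ≤ Metric.infDist x Z →
      Metric.diam (projSet x Z ∪ projSet y Z) ≤ cZ * κ (dist o x))
    (η : ℝ → X) (s s' : ℝ) (hss : s ≤ s')
    (hη : IsQuasiGeodesicOn q Q η (Set.Icc s s'))
    (hout : ∀ t ∈ Set.Icc s s',
      (q * ((q + 1) + q * cZ + Q)) * κ (dist o (η t)) < Metric.infDist (η t) Z) :
    s' - s ≤ (q * cZ + q + Q) * (Metric.infDist (η s) Z + Metric.infDist (η s') Z) := by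
  have hq0 : (0:ℝ) < q := lt_of_lt_of_le one_pos hq
  set M : ℝ := q * ((q + 1) + q * cZ + Q) with hMdef
  have hM0 : (0:ℝ) < M := by rw [hMdef]; positivity
  have hMQ : (0:ℝ) < M - Q := by
    rw [hMdef]
    nlinarith [mul_nonneg (sub_nonneg.2 hq) hQ, mul_nonneg (mul_nonneg hq0.le hq0.le) hcZ.le]
  clear_value M
  set α : ℝ := q * cZ / (M - Q) with hαdef
  have hα0 : 0 ≤ α := by rw [hαdef]; exact div_nonneg (by positivity) hMQ.le
  clear_value α
  set Δ : ℝ := (M - Q) / q with hΔdef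
  have hΔpos : 0 < Δ := by rw [hΔdef]; exact div_pos hMQ hq0
  clear_value Δ
  -- distance to Z is at least M along the segment
  have hd : ∀ t ∈ Set.Icc s s', M ≤ Metric.infDist (η t) Z := by
    intro t ht
    have h1 := hout t ht
    have h2 : (1:ℝ) ≤ κ (dist o (η t)) := hκone _ dist_nonneg
    have h3 : M * 1 ≤ M * κ (dist o (η t)) := mul_le_mul_of_nonneg_left h2 hM0.le
    linarith
  -- nearest-point projections exist and are bounded
  have hproj_ne : ∀ x : X, ∃ p, p ∈ projSet x Z := by
    intro x
    obtain ⟨z, hz, he⟩ := hZcl.exists_infDist_eq_dist hZne x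
    exact ⟨z, hz, he.symm⟩
  have hbdd : ∀ x : X, Bornology.IsBounded (projSet x Z) := by
    intro x
    apply (Metric.isBounded_closedBall (x := x) (r := Metric.infDist x Z)).subset
    intro z hz
    simp only [Metric.mem_closedBall, dist_comm z x]
    exact le_of_eq hz.2
  have key : ∀ x y : X, dist x y ≤ Metric.infDist x Z →
      ∀ p ∈ projSet x Z, ∀ p' ∈ projSet y Z, dist p p' ≤ cZ * κ (dist o x) := by
    intro x y hxy p hp p' hp'
    have hb : Bornology.IsBounded (projSet x Z ∪ projSet y Z) := (hbdd x).union (hbdd y)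
    exact (Metric.dist_le_diam_of_mem hb (Set.mem_union_left _ hp)
      (Set.mem_union_right _ hp')).trans (hcontr x y hxy)
  -- the chain claim
  have claim : ∀ n : ℕ, ∃ a ∈ Set.Icc s s',
      (∃ p ∈ projSet (η a) Z,
        dist (η s) p ≤ Metric.infDist (η s) Z + α * (a - s)) ∧
      (s + (n:ℝ) * Δ ≤ a ∨ q * (s' - a) + Q ≤ Metric.infDist (η a) Z) := by
    intro n
    induction n with
    | zero =>
      obtain ⟨p, hp⟩ := hproj_ne (η s)
      refine ⟨s, Set.mem_Icc.mpr ⟨le_rfl, hss⟩, ⟨p, hp, ?_⟩, Or.inl (by simp)⟩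
      rw [hp.2]
      have : α * (s - s) = 0 := by ring
      linarith
    | succ n ih =>
      obtain ⟨a, haI, ⟨p, hp, hpb⟩, hcase⟩ := ih
      by_cases hC : q * (s' - a) + Q ≤ Metric.infDist (η a) Z
      · exact ⟨a, haI, ⟨p, hp, hpb⟩, Or.inr hC⟩
      · have han : s + (n:ℝ) * Δ ≤ a := hcase.resolve_right hC
        push_neg at hC
        have hdaM : M ≤ Metric.infDist (η a) Z := hd a haI
        have hstep : Δ ≤ (Metric.infDist (η a) Z - Q) / q := by
          rw [hΔdef]
          exact (div_le_div_iff_of_pos_right hq0).mpr (by linarith)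
        have haa' : a < a + (Metric.infDist (η a) Z - Q) / q := by
          have h0 : 0 < (Metric.infDist (η a) Z - Q) / q := lt_of_lt_of_le hΔpos hstep
          linarith
        have ha's : a + (Metric.infDist (η a) Z - Q) / q ≤ s' := by
          have h1 : (Metric.infDist (η a) Z - Q) / q < s' - a := by
            rw [div_lt_iff₀ hq0]; linarith
          linarith
        have ha'I : a + (Metric.infDist (η a) Z - Q) / q ∈ Set.Icc s s' :=
          Set.mem_Icc.mpr ⟨le_trans haI.1 haa'.le, ha's⟩
        have hdist : dist (η a) (η (a + (Metric.infDist (η a) Z - Q) / q)) ≤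
            Metric.infDist (η a) Z := by
          have h2 := (hη a haI _ ha'I).2
          have habs : |a - (a + (Metric.infDist (η a) Z - Q) / q)| =
              (Metric.infDist (η a) Z - Q) / q := by
            rw [abs_sub_comm]
            rw [abs_of_nonneg (by linarith)]
            ring
          rw [habs] at h2
          have h3 : q * ((Metric.infDist (η a) Z - Q) / q) = Metric.infDist (η a) Z - Q := by
            field_simp
          linarith
        obtain ⟨p', hp'⟩ := hproj_ne (η (a + (Metric.infDist (η a) Z - Q) / q))
        have hpp' : dist p p' ≤ cZ * κ (dist o (η a)) := key _ _ hdist p hp p' hp'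
        have hκa : M * κ (dist o (η a)) ≤ Metric.infDist (η a) Z := (hout a haI).le
        have hκ1 : (1:ℝ) ≤ κ (dist o (η a)) := hκone _ dist_nonneg
        have hfrac : cZ * κ (dist o (η a)) ≤ α * ((Metric.infDist (η a) Z - Q) / q) := by
          have heq : α * ((Metric.infDist (η a) Z - Q) / q) =
              cZ * ((Metric.infDist (η a) Z - Q) / (M - Q)) := by
            rw [hαdef]; field_simp
          rw [heq]
          apply mul_le_mul_of_nonneg_left _ hcZ.le
          rw [le_div_iff₀ hMQ]
          have h4 : 0 ≤ Q * (κ (dist o (η a)) - 1) := mul_nonneg hQ (by linarith)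
          nlinarith [hκa, h4]
        refine ⟨a + (Metric.infDist (η a) Z - Q) / q, ha'I, ⟨p', hp', ?_⟩, Or.inl ?_⟩
        · calc dist (η s) p' ≤ dist (η s) p + dist p p' := dist_triangle _ _ _
            _ ≤ Metric.infDist (η s) Z + α * (a - s) +
                α * ((Metric.infDist (η a) Z - Q) / q) := by linarith
            _ = Metric.infDist (η s) Z +
                α * (a + (Metric.infDist (η a) Z - Q) / q - s) := by ring
        · push_cast
          have : s + ((n:ℝ) + 1) * Δ = (s + (n:ℝ) * Δ) + Δ := by ring
          rw [this]
          exact add_le_add han hstep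
  -- choose n large enough
  obtain ⟨n, hn⟩ := exists_nat_gt ((s' - s) / Δ)
  have hnΔ : s' - s < (n:ℝ) * Δ := (div_lt_iff₀ hΔpos).mp hn
  obtain ⟨a, haI, ⟨p, hp, hpb⟩, hcase⟩ := claim n
  have hC : q * (s' - a) + Q ≤ Metric.infDist (η a) Z := by
    rcases hcase with h | h
    · exfalso; have := haI.2; linarith
    · exact h
  obtain ⟨p', hp'⟩ := hproj_ne (η s')
  have hu : 0 ≤ a - s := by have := haI.1; linarith
  have hv : 0 ≤ s' - a := by have := haI.2; linarith
  have hdist : dist (η a) (η s') ≤ Metric.infDist (η a) Z := by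
    have h2 := (hη a haI s' (Set.mem_Icc.mpr ⟨hss, le_rfl⟩)).2
    have habs : |a - s'| = s' - a := by rw [abs_sub_comm, abs_of_nonneg hv]
    rw [habs] at h2
    linarith
  have hpp' : dist p p' ≤ cZ * κ (dist o (η a)) := key _ _ hdist p hp p' hp'
  have hκa : M * κ (dist o (η a)) ≤ Metric.infDist (η a) Z := (hout a haI).le
  have hK1 : (1:ℝ) ≤ κ (dist o (η a)) := hκone _ dist_nonneg
  have hlow : 1 / q * (s' - s) - Q ≤ dist (η s) (η s') := by
    have h1 := (hη s (Set.mem_Icc.mpr ⟨le_rfl, hss⟩) s' (Set.mem_Icc.mpr ⟨hss, le_rfl⟩)).1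
    have habs : |s - s'| = s' - s := by rw [abs_sub_comm, abs_of_nonneg (by linarith)]
    rw [habs] at h1
    exact h1
  have htri : dist (η s) (η s') ≤ Metric.infDist (η s) Z + α * (a - s) +
      cZ * κ (dist o (η a)) + Metric.infDist (η s') Z := by
    have h1 : dist (η s) (η s') ≤ dist (η s) p + dist p p' + dist p' (η s') :=
      dist_triangle4 _ _ _ _
    have h2 : dist p' (η s') = Metric.infDist (η s') Z := by rw [dist_comm]; exact hp'.2
    linarith
  have hda_up : Metric.infDist (η a) Z ≤ q * (s' - a) + Q + Metric.infDist (η s') Z := by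
    have h3 : Metric.infDist (η a) Z ≤ Metric.infDist (η s') Z + dist (η a) (η s') :=
      Metric.infDist_le_infDist_add_dist
    have h2 := (hη a haI s' (Set.mem_Icc.mpr ⟨hss, le_rfl⟩)).2
    have habs : |a - s'| = s' - a := by rw [abs_sub_comm, abs_of_nonneg hv]
    rw [habs] at h2
    linarith
  have hcZK : cZ * κ (dist o (η a)) ≤
      cZ / M * (q * (s' - a) + Q + Metric.infDist (η s') Z) := by
    rw [div_mul_eq_mul_div, le_div_iff₀ hM0]
    calc cZ * κ (dist o (η a)) * M = cZ * (M * κ (dist o (η a))) := by ring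
      _ ≤ cZ * Metric.infDist (η a) Z := mul_le_mul_of_nonneg_left hκa hcZ.le
      _ ≤ cZ * (q * (s' - a) + Q + Metric.infDist (η s') Z) :=
          mul_le_mul_of_nonneg_left hda_up hcZ.le
  have hαM : q * cZ / M ≤ α := by
    rw [hαdef]
    apply div_le_div_of_nonneg_left (by positivity) hMQ (by linarith)
  have hds : M ≤ Metric.infDist (η s) Z := hd s (Set.mem_Icc.mpr ⟨le_rfl, hss⟩)
  have hds' : M ≤ Metric.infDist (η s') Z := hd s' (Set.mem_Icc.mpr ⟨hss, le_rfl⟩)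
  have hS2M : 2 * M ≤ Metric.infDist (η s) Z + Metric.infDist (η s') Z := by linarith
  have hS0 : 0 ≤ Metric.infDist (η s) Z + Metric.infDist (η s') Z := by linarith
  -- master inequality
  have e2 : q * cZ / M * (s' - a) ≤ α * (s' - a) := mul_le_mul_of_nonneg_right hαM hv
  have hβds : 0 ≤ cZ / M * Metric.infDist (η s) Z :=
    mul_nonneg (div_nonneg hcZ.le hM0.le) (le_trans hM0.le hds)
  have e1 : cZ / M * (q * (s' - a) + Q + Metric.infDist (η s') Z) =
      q * cZ / M * (s' - a) + cZ / M * Q + cZ / M * Metric.infDist (η s') Z := by ring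
  have step1 : 1 / q * (s' - s) - α * (s' - s) ≤
      (1 + cZ / M) * (Metric.infDist (η s) Z + Metric.infDist (η s') Z) +
      (1 + cZ / M) * Q := by
    have e3 : α * (a - s) + α * (s' - a) = α * (s' - s) := by ring
    rw [e1] at hcZK
    nlinarith [hlow, htri, hcZK, e2, hβds, e3]
  have hQ2M : Q = Q / (2 * M) * (2 * M) :=
    (div_mul_cancel₀ Q (mul_ne_zero two_ne_zero hM0.ne')).symm
  have step2 : (1 + cZ / M) * Q ≤
      (1 + cZ / M) * (Q / (2 * M)) *
        (Metric.infDist (η s) Z + Metric.infDist (η s') Z) := by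
    have hcoef : 0 ≤ (1 + cZ / M) * (Q / (2 * M)) := by positivity
    have e4 : (1 + cZ / M) * (Q / (2 * M)) * (2 * M) = (1 + cZ / M) * Q := by
      field_simp
    calc (1 + cZ / M) * Q = (1 + cZ / M) * (Q / (2 * M)) * (2 * M) := e4.symm
      _ ≤ (1 + cZ / M) * (Q / (2 * M)) *
            (Metric.infDist (η s) Z + Metric.infDist (η s') Z) :=
          mul_le_mul_of_nonneg_left hS2M hcoef
  have master : (1 / q - α) * (s' - s) ≤
      (1 + cZ / M) * (1 + Q / (2 * M)) *
        (Metric.infDist (η s) Z + Metric.infDist (η s') Z) := by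
    nlinarith [step1, step2]
  -- the star inequality
  have hstar : (1 + cZ / M) * (1 + Q / (2 * M)) ≤ (q * cZ + q + Q) * (1 / q - α) := by
    rw [hαdef, hMdef]
    exact stmt8_star q Q cZ hq hQ hcZ
  have hpos : 0 < 1 / q - α := by
    have heq : 1 / q - α = (M - Q - q ^ 2 * cZ) / (q * (M - Q)) := by
      rw [hαdef]; field_simp
    have hnum : 0 < M - Q - q ^ 2 * cZ := by
      rw [hMdef]
      nlinarith [mul_nonneg (sub_nonneg.2 hq) hQ]
    rw [heq]
    exact div_pos hnum (by positivity)
  have final : (1 / q - α) * (s' - s) ≤ (1 / q - α) *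
      ((q * cZ + q + Q) * (Metric.infDist (η s) Z + Metric.infDist (η s') Z)) := by
    calc (1 / q - α) * (s' - s) ≤ (1 + cZ / M) * (1 + Q / (2 * M)) *
          (Metric.infDist (η s) Z + Metric.infDist (η s') Z) := master
      _ ≤ (q * cZ + q + Q) * (1 / q - α) *
          (Metric.infDist (η s) Z + Metric.infDist (η s') Z) :=
        mul_le_mul_of_nonneg_right hstar hS0
      _ = (1 / q - α) *
          ((q * cZ + q + Q) * (Metric.infDist (η s) Z + Metric.infDist (η s') Z)) := by
        ring
  exact le_of_mul_le_mul_left final hpos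
end

section
/- Let b be a κ-contracting geodesic ray in a proper CAT(0) space X with base-point o, with strong Morse gauge m_b (as in the strong Morse theorem). If β is a (q,Q)-quasi-geodesic ray in the κ-equivalence class of b, and β ⊂ N_κ(b, m_b(q,Q)), then b ⊂ N_κ(β, 2·m_b(q,Q)). Concretely: for each r > 0, letting β_r = β(t_r) be the first point of β of norm r, and p = π_b(β_r) the projection of β_r to b, one has d(b(r), β) ≤ 2·m_b(q,Q)·κ(r). -/
/-- Let `b` be a κ-contracting geodesic ray with strong Morse gauge
value `m = m_b(q,Q)` and `β` a continuous `(q,Q)`-quasi-geodesic ray in the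
class of `b` with `β ⊆ N_κ(b, m)`.  Then `b ⊆ N_κ(β, 2m)`: for every `r > 0`,
`d(b(r), β) ≤ 2·m·κ(r)`. -/
theorem stmt_9 {X : Type*} [MetricSpace X] [ProperSpace X] (o : X) (κ : ℝ → ℝ)
    (hκmono : MonotoneOn κ (Set.Ici 0))
    (hκconc : ConcaveOn ℝ (Set.Ici 0) κ)
    (hκone : ∀ t : ℝ, 0 ≤ t → 1 ≤ κ t)
    (hκsub : Filter.Tendsto (fun t => κ t / t) Filter.atTop (nhds 0))
    (b : ℝ → X)
    (hb : ∀ s t : ℝ, 0 ≤ s → 0 ≤ t → dist (b s) (b t) = |s - t|)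
    (hb0 : b 0 = o)
    (β : ℝ → X) (q Q : ℝ) (hq : 1 ≤ q) (hQ : 0 ≤ Q)
    (hβ : IsQuasiGeodesicOn q Q β (Set.Ici 0)) (hβ0 : β 0 = o)
    (hβcont : Continuous β)
    (m : ℝ) (hm : 0 < m)
    (hβb : ∀ t : ℝ, 0 ≤ t →
      Metric.infDist (β t) (b '' Set.Ici 0) ≤ m * κ (dist o (β t))) :
    ∀ r : ℝ, 0 < r → Metric.infDist (b r) (β '' Set.Ici 0) ≤ 2 * m * κ r := by
  intro r hr
  have hq0 : 0 < q := lt_of_lt_of_le one_pos hq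
  -- find t with dist o (β t) = r via IVT
  set T : ℝ := q * (r + Q) with hT
  have hT0 : 0 ≤ T := mul_nonneg hq0.le (by linarith)
  have hfT : r ≤ dist o (β T) := by
    have := (hβ 0 (Set.mem_Ici.mpr le_rfl) T (Set.mem_Ici.mpr hT0)).1
    rw [hβ0] at this
    have habs : |(0:ℝ) - T| = T := by rw [abs_sub_comm]; simpa using abs_of_nonneg hT0
    rw [habs] at this
    have : (1 / q) * (q * (r + Q)) - Q ≤ dist o (β T) := this
    rw [one_div, inv_mul_cancel_left₀ (ne_of_gt hq0)] at this
    linarith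
  have hcont : ContinuousOn (fun t => dist o (β t)) (Set.Icc 0 T) :=
    (continuous_const.dist hβcont).continuousOn
  have hmem : r ∈ Set.Icc (dist o (β 0)) (dist o (β T)) := by
    rw [hβ0]; simpa using ⟨hr.le, hfT⟩
  obtain ⟨t, ht, hdt⟩ := intermediate_value_Icc hT0 hcont hmem
  have ht0 : 0 ≤ t := ht.1
  have hdt' : dist o (β t) = r := hdt
  -- now infDist (β t) (b '' Ici 0) ≤ m * κ r
  have key : Metric.infDist (β t) (b '' Set.Ici 0) ≤ m * κ r := by
    have := hβb t ht0
    rwa [hdt'] at this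
  -- conclude by ε-argument
  have hne : (b '' Set.Ici 0).Nonempty := ⟨b 0, Set.mem_image_of_mem _ (Set.mem_Ici.mpr le_rfl)⟩
  refine le_of_forall_pos_le_add ?_
  intro ε hε
  have hlt : Metric.infDist (β t) (b '' Set.Ici 0) < m * κ r + ε / 2 := by
    linarith
  obtain ⟨y, hy, hdy⟩ := (Metric.infDist_lt_iff hne).mp hlt
  obtain ⟨s, hs, rfl⟩ := hy
  -- dist o (b s) = s
  have hbs : dist o (b s) = s := by
    rw [← hb0, hb 0 s le_rfl hs]
    rw [abs_sub_comm]; simpa using abs_of_nonneg (Set.mem_Ici.mp hs)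
  have htri : |s - r| ≤ dist (β t) (b s) := by
    have h1 := abs_dist_sub_le (b s) (β t) o
    rw [dist_comm (b s) o, dist_comm (β t) o, hbs, hdt', dist_comm] at h1
    exact h1
  have hsr : |r - s| ≤ m * κ r + ε / 2 := by
    rw [abs_sub_comm]; linarith
  have hfin : dist (b r) (β t) ≤ 2 * m * κ r + ε := by
    calc dist (b r) (β t) ≤ dist (b r) (b s) + dist (b s) (β t) := dist_triangle _ _ _
    _ ≤ |r - s| + (m * κ r + ε / 2) := by
        rw [hb r s hr.le hs]
        gcongr
        rw [dist_comm]; linarith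
    _ ≤ (m * κ r + ε / 2) + (m * κ r + ε / 2) := by linarith
    _ = 2 * m * κ r + ε := by ring
  calc Metric.infDist (b r) (β '' Set.Ici 0) ≤ dist (b r) (β t) :=
        Metric.infDist_le_dist_of_mem (Set.mem_image_of_mem _ (Set.mem_Ici.mpr ht0))
  _ ≤ 2 * m * κ r + ε := hfin
end
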